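/- arXiv:2411.04035 — 3 statements merged into one kernel-verified Lean document; each statement's English description precedes it below -/
import Mathlib

section
/- Let H₁, H₂ be finite-dimensional Hilbert spaces and let A₁ ⊆ PSD(H₁), A₂ ⊆ PSD(H₂), A₁₂ ⊆ PSD(H₁⊗H₂). Then the reverse polar sets restricted to PSD are closed under tensor product, i.e., (A₁⋆∩PSD) ⊗ (A₂⋆∩PSD) ⊆ A₁₂⋆∩PSD, if and only if the reverse support functions are super-multiplicative: h̲_{A₁₂}(X₁⊗X₂) ≥ h̲_{A₁}(X₁)·h̲_{A₂}(X₂) for all positive semidefinite X₁, X₂. -/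
open scoped Matrix ComplexOrder Kronecker Classical ENNReal NNReal
open Matrix Filter

noncomputable section

variable {ι : Type*} [Fintype ι] [DecidableEq ι]

/-- Real part of tr[X Y]. -/
def trR (X Y : Matrix ι ι ℂ) : ℝ := ((X * Y).trace).re

/-- Density matrices: positive semidefinite with unit trace. -/
def IsDensity (ρ : Matrix ι ι ℂ) : Prop := ρ.PosSemidef ∧ ρ.trace = 1

/-- Functional calculus for Hermitian matrices (junk value `0` otherwise). -/
def mfun (f : ℝ → ℝ) (A : Matrix ι ι ℂ) : Matrix ι ι ℂ :=
  if h : A.IsHermitian then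
    (h.eigenvectorUnitary : Matrix ι ι ℂ) *
      Matrix.diagonal (fun i => (f (h.eigenvalues i) : ℂ)) *
        (star (h.eigenvectorUnitary : Matrix ι ι ℂ))
  else 0

/-- Matrix logarithm (natural log on the spectrum, `0` off the support). -/
def matLog (A : Matrix ι ι ℂ) : Matrix ι ι ℂ :=
  mfun (fun x => if 0 < x then Real.log x else 0) A

/-- Matrix real power, taken on the support. -/
def matPow (e : ℝ) (A : Matrix ι ι ℂ) : Matrix ι ι ℂ :=
  mfun (fun x => if 0 < x then x ^ e else 0) A

/-- Projection onto the support of a Hermitian matrix. -/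
def suppProj (A : Matrix ι ι ℂ) : Matrix ι ι ℂ := mfun (fun x => if 0 < x then 1 else 0) A

/-- Absolute value of a Hermitian matrix. -/
def matAbs (A : Matrix ι ι ℂ) : Matrix ι ι ℂ := mfun (fun x => |x|) A

/-- `supp ρ ⊆ supp σ`, expressed via kernels. -/
def kerLE (σ ρ : Matrix ι ι ℂ) : Prop := ∀ v, σ.mulVec v = 0 → ρ.mulVec v = 0

/-- Polar set restricted to positive semidefinite matrices. -/
def polarPSD (S : Set (Matrix ι ι ℂ)) : Set (Matrix ι ι ℂ) :=
  {X | X.PosSemidef ∧ ∀ Y ∈ S, trR X Y ≤ 1}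

/-- Reverse polar set restricted to positive semidefinite matrices. -/
def revPolarPSD (S : Set (Matrix ι ι ℂ)) : Set (Matrix ι ι ℂ) :=
  {X | X.PosSemidef ∧ ∀ Y ∈ S, 1 ≤ trR X Y}

/-- A POVM with finitely many outcomes. -/
def IsPOVM {k : ℕ} (M : Fin k → Matrix ι ι ℂ) : Prop :=
  (∀ x, (M x).PosSemidef) ∧ ∑ x, M x = 1

/-- Classical Kullback–Leibler divergence (natural log). -/
def klDiv {k : ℕ} (P Q : Fin k → ℝ) : EReal :=
  if ∀ x, Q x = 0 → P x = 0 then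
    (((∑ x, if P x = 0 then 0 else P x * Real.log (P x / Q x)) : ℝ) : EReal)
  else ⊤

/-- Classical Rényi divergence of order `α` (natural log). -/
def renyiDiv {k : ℕ} (α : ℝ) (P Q : Fin k → ℝ) : EReal :=
  if α < 1 ∨ ∀ x, Q x = 0 → P x = 0 then
    ((((α - 1)⁻¹ * Real.log (∑ x, P x ^ α * Q x ^ (1 - α))) : ℝ) : EReal)
  else ⊤

/-- Measured relative entropy. -/
def Dmeas (ρ σ : Matrix ι ι ℂ) : EReal :=
  ⨆ (k : ℕ) (M : Fin k → Matrix ι ι ℂ) (_ : IsPOVM M),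
    klDiv (fun x => trR (M x) ρ) (fun x => trR (M x) σ)

/-- Measured Rényi divergence of order `α`. -/
def DmeasR (α : ℝ) (ρ σ : Matrix ι ι ℂ) : EReal :=
  ⨆ (k : ℕ) (M : Fin k → Matrix ι ι ℂ) (_ : IsPOVM M),
    renyiDiv α (fun x => trR (M x) ρ) (fun x => trR (M x) σ)

/-- Umegaki relative entropy (natural log). -/
def relEnt (ρ σ : Matrix ι ι ℂ) : EReal :=
  if kerLE σ ρ then ((trR ρ (matLog ρ - matLog σ) : ℝ) : EReal) else ⊤

/-- Sandwiched Rényi divergence (natural log). -/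
def sandR (α : ℝ) (ρ σ : Matrix ι ι ℂ) : EReal :=
  if kerLE σ ρ then
    ((((α - 1)⁻¹ *
      Real.log ((matPow α (matPow ((1 - α) / (2 * α)) σ * ρ *
        matPow ((1 - α) / (2 * α)) σ)).trace.re)) : ℝ) : EReal)
  else ⊤

/-- Max-relative entropy (natural log). -/
def Dmax (ρ σ : Matrix ι ι ℂ) : EReal :=
  sInf ((fun t : ℝ => ((Real.log t : ℝ) : EReal)) ''
    {t : ℝ | 0 < t ∧ ((t : ℂ) • σ - ρ).PosSemidef})

/-- Divergence between two sets of operators. -/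
def setDiv (D : Matrix ι ι ℂ → Matrix ι ι ℂ → EReal)
    (A B : Set (Matrix ι ι ℂ)) : EReal :=
  ⨅ ρ ∈ A, ⨅ σ ∈ B, D ρ σ


variable {ι₁ ι₂ : Type*} [Fintype ι₁] [DecidableEq ι₁] [Fintype ι₂] [DecidableEq ι₂]

/-- Reverse support function of a set, valued in `ℝ≥0∞`. -/
def hInff (S : Set (Matrix ι ι ℂ)) (X : Matrix ι ι ℂ) : ℝ≥0∞ :=
  ⨅ σ ∈ S, ENNReal.ofReal (trR X σ)

lemma trR_real_smul (c : ℝ) (X Y : Matrix ι ι ℂ) :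
    trR ((c : ℂ) • X) Y = c * trR X Y := by
  simp [trR, Matrix.smul_mul, Matrix.trace_smul, smul_eq_mul, Complex.mul_re]

lemma psd_real_smul {c : ℝ} (hc : 0 ≤ c) {X : Matrix ι ι ℂ} (hX : X.PosSemidef) :
    ((c : ℂ) • X).PosSemidef := by
  constructor
  · have : ((c : ℂ) • X)ᴴ = star (c : ℂ) • Xᴴ := Matrix.conjTranspose_smul _ _
    rw [Matrix.IsHermitian, this, hX.1.eq]
    congr 1
    simp [Complex.star_def, Complex.conj_ofReal]
  · intro x
    exact (hX.smul (by exact_mod_cast hc : (0:ℂ) ≤ (c:ℂ))).2 x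

lemma kron_conjTranspose {ι₁ ι₂ : Type*} (A : Matrix ι₁ ι₁ ℂ) (B : Matrix ι₂ ι₂ ℂ) :
    (A ⊗ₖ B)ᴴ = Aᴴ ⊗ₖ Bᴴ := by
  ext ⟨i, j⟩ ⟨k, l⟩
  simp [Matrix.conjTranspose_apply, Matrix.kroneckerMap_apply, star_mul']

lemma psd_kron {ι₁ ι₂ : Type*} [Fintype ι₁] [DecidableEq ι₁] [Fintype ι₂] [DecidableEq ι₂]
    {X₁ : Matrix ι₁ ι₁ ℂ} {X₂ : Matrix ι₂ ι₂ ℂ}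
    (hX₁ : X₁.PosSemidef) (hX₂ : X₂.PosSemidef) : (X₁ ⊗ₖ X₂).PosSemidef := by
  exact hX₁.kronecker hX₂

lemma hInff_le {S : Set (Matrix ι ι ℂ)} {σ : Matrix ι ι ℂ} (h : σ ∈ S) (X : Matrix ι ι ℂ) :
    hInff S X ≤ ENNReal.ofReal (trR X σ) := iInf₂_le σ h

lemma mem_revPolarPSD_smul {S : Set (Matrix ι ι ℂ)} {X : Matrix ι ι ℂ} {t : ℝ}
    (ht : 0 < t) (hX : X.PosSemidef) (h : ENNReal.ofReal t ≤ hInff S X) :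
    (((t⁻¹ : ℝ) : ℂ) • X) ∈ revPolarPSD S := by
  refine ⟨psd_real_smul (by positivity) hX, fun Y hY => ?_⟩
  have hle := le_trans h (hInff_le hY X)
  have hpos : 0 < trR X Y :=
    ENNReal.ofReal_pos.mp (lt_of_lt_of_le (ENNReal.ofReal_pos.mpr ht) hle)
  have htr : t ≤ trR X Y := (ENNReal.ofReal_le_ofReal_iff hpos.le).mp hle
  rw [trR_real_smul]
  calc (1 : ℝ) = t⁻¹ * t := (inv_mul_cancel₀ ht.ne').symm
    _ ≤ t⁻¹ * trR X Y := mul_le_mul_of_nonneg_left htr (inv_nonneg.mpr ht.le)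

lemma le_hInff {S : Set (Matrix ι ι ℂ)} {X : Matrix ι ι ℂ} {c : ℝ≥0∞}
    (h : ∀ σ ∈ S, c ≤ ENNReal.ofReal (trR X σ)) : c ≤ hInff S X := le_iInf₂ h

/-- Tensor-stability of reverse polar sets (restricted to PSD) is equivalent
to super-multiplicativity of the reverse support functions. -/
theorem reverse_polar_tensor_stable_iff_support_supermultiplicative
    (A₁ : Set (Matrix ι₁ ι₁ ℂ)) (A₂ : Set (Matrix ι₂ ι₂ ℂ))
    (A₁₂ : Set (Matrix (ι₁ × ι₂) (ι₁ × ι₂) ℂ))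
    (hA₁ : ∀ X ∈ A₁, X.PosSemidef) (hA₂ : ∀ X ∈ A₂, X.PosSemidef)
    (hA₁₂ : ∀ X ∈ A₁₂, X.PosSemidef) :
    (∀ X₁ ∈ revPolarPSD A₁, ∀ X₂ ∈ revPolarPSD A₂, X₁ ⊗ₖ X₂ ∈ revPolarPSD A₁₂) ↔
      (∀ (X₁ : Matrix ι₁ ι₁ ℂ) (X₂ : Matrix ι₂ ι₂ ℂ), X₁.PosSemidef → X₂.PosSemidef →
        hInff A₁ X₁ * hInff A₂ X₂ ≤ hInff A₁₂ (X₁ ⊗ₖ X₂)) := by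
  constructor
  · intro hstab X₁ X₂ hX₁ hX₂
    -- Key scaling fact
    have key : ∀ t₁ t₂ : ℝ, 0 < t₁ → 0 < t₂ →
        ENNReal.ofReal t₁ ≤ hInff A₁ X₁ → ENNReal.ofReal t₂ ≤ hInff A₂ X₂ →
        ENNReal.ofReal (t₁ * t₂) ≤ hInff A₁₂ (X₁ ⊗ₖ X₂) := by
      intro t₁ t₂ ht₁ ht₂ h₁ h₂
      have m₁ := mem_revPolarPSD_smul ht₁ hX₁ h₁
      have m₂ := mem_revPolarPSD_smul ht₂ hX₂ h₂
      have hmem := hstab _ m₁ _ m₂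
      have hk : ((((t₁⁻¹ : ℝ) : ℂ)) • X₁) ⊗ₖ ((((t₂⁻¹ : ℝ) : ℂ)) • X₂)
          = (((t₁⁻¹ * t₂⁻¹ : ℝ) : ℂ)) • (X₁ ⊗ₖ X₂) := by
        rw [Matrix.smul_kronecker, Matrix.kronecker_smul, smul_smul]
        norm_cast
      refine le_hInff fun Y hY => ?_
      have h1 := hmem.2 Y hY
      rw [hk, trR_real_smul] at h1
      refine ENNReal.ofReal_le_ofReal ?_
      have h2 := mul_le_mul_of_nonneg_left h1 (mul_pos ht₁ ht₂).le
      rw [mul_one] at h2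
      calc t₁ * t₂ ≤ t₁ * t₂ * (t₁⁻¹ * t₂⁻¹ * trR (X₁ ⊗ₖ X₂) Y) := h2
        _ = (t₁ * t₁⁻¹) * ((t₂ * t₂⁻¹) * trR (X₁ ⊗ₖ X₂) Y) := by ring
        _ = trR (X₁ ⊗ₖ X₂) Y := by
            rw [mul_inv_cancel₀ ht₁.ne', mul_inv_cancel₀ ht₂.ne', one_mul, one_mul]
    -- Now conclude
    set c₁ := hInff A₁ X₁ with hc₁
    set c₂ := hInff A₂ X₂ with hc₂
    rcases eq_or_ne c₁ 0 with h0 | h0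
    · simp [h0]
    rcases eq_or_ne c₂ 0 with h0' | h0'
    · simp [h0']
    -- helper to show the RHS is ⊤ when one side is ⊤
    have top_case : ∀ t : ℝ, 0 < t →
        ((∀ n : ℕ, ENNReal.ofReal (((n : ℝ) + 1) * t) ≤ hInff A₁₂ (X₁ ⊗ₖ X₂))) →
        hInff A₁₂ (X₁ ⊗ₖ X₂) = ⊤ := by
      intro t ht hall
      by_contra hne
      set r := (hInff A₁₂ (X₁ ⊗ₖ X₂)).toReal with hr
      obtain ⟨n, hn⟩ := exists_nat_gt ((r + 1) / t)
      have h3 := hall n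
      rw [(ENNReal.ofReal_toReal hne).symm] at h3
      have h4 : ((n : ℝ) + 1) * t ≤ r :=
        (ENNReal.ofReal_le_ofReal_iff ENNReal.toReal_nonneg).mp h3
      have h5 : r + 1 < (n : ℝ) * t := (div_lt_iff₀ ht).mp hn
      nlinarith
    rcases eq_or_ne c₁ ⊤ with htop₁ | htop₁
    · -- pick t₂ with 0 < t₂ and ofReal t₂ ≤ c₂
      obtain ⟨t₂, ht₂, hle₂⟩ : ∃ t₂ : ℝ, 0 < t₂ ∧ ENNReal.ofReal t₂ ≤ c₂ := by
        rcases eq_or_ne c₂ ⊤ with h | h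
        · exact ⟨1, one_pos, by simp [h]⟩
        · exact ⟨c₂.toReal, ENNReal.toReal_pos h0' h, by rw [ENNReal.ofReal_toReal h]⟩
      have := top_case t₂ ht₂ (fun n => key ((n : ℝ) + 1) t₂ (by positivity) ht₂
        (by rw [htop₁]; exact le_top) hle₂)
      rw [this]; exact le_top
    rcases eq_or_ne c₂ ⊤ with htop₂ | htop₂
    · have ht₁ : 0 < c₁.toReal := ENNReal.toReal_pos h0 htop₁
      have hle₁ : ENNReal.ofReal c₁.toReal ≤ c₁ := by rw [ENNReal.ofReal_toReal htop₁]
      have := top_case c₁.toReal ht₁ (fun n => by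
        have hk := key c₁.toReal ((n : ℝ) + 1) ht₁ (by positivity) hle₁
          (by rw [htop₂]; exact le_top)
        rwa [mul_comm] at hk)
      rw [this]; exact le_top
    · have ht₁ : 0 < c₁.toReal := ENNReal.toReal_pos h0 htop₁
      have ht₂ : 0 < c₂.toReal := ENNReal.toReal_pos h0' htop₂
      have hk := key c₁.toReal c₂.toReal ht₁ ht₂
        (by rw [ENNReal.ofReal_toReal htop₁]) (by rw [ENNReal.ofReal_toReal htop₂])
      calc c₁ * c₂ = ENNReal.ofReal c₁.toReal * ENNReal.ofReal c₂.toReal := by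
            rw [ENNReal.ofReal_toReal htop₁, ENNReal.ofReal_toReal htop₂]
        _ = ENNReal.ofReal (c₁.toReal * c₂.toReal) := (ENNReal.ofReal_mul ht₁.le).symm
        _ ≤ hInff A₁₂ (X₁ ⊗ₖ X₂) := hk
  · rintro hsup X₁ ⟨hX₁, hb₁⟩ X₂ ⟨hX₂, hb₂⟩
    have h1 : (1 : ℝ≥0∞) ≤ hInff A₁ X₁ :=
      le_hInff fun σ hσ => by simpa using ENNReal.one_le_ofReal.mpr (hb₁ σ hσ)
    have h2 : (1 : ℝ≥0∞) ≤ hInff A₂ X₂ :=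
      le_hInff fun σ hσ => by simpa using ENNReal.one_le_ofReal.mpr (hb₂ σ hσ)
    have h3 : (1 : ℝ≥0∞) ≤ hInff A₁₂ (X₁ ⊗ₖ X₂) := by
      calc (1 : ℝ≥0∞) = 1 * 1 := (one_mul 1).symm
        _ ≤ hInff A₁ X₁ * hInff A₂ X₂ := mul_le_mul' h1 h2
        _ ≤ hInff A₁₂ (X₁ ⊗ₖ X₂) := hsup X₁ X₂ hX₁ hX₂
    exact ⟨psd_kron hX₁ hX₂, fun Y hY =>
      ENNReal.one_le_ofReal.mp (le_trans h3 (hInff_le hY _))⟩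

end
end

section
/- Let X be a permutation-invariant operator on H^{⊗n} where dim H = d (i.e., X commutes with the natural action of the symmetric group S_n permuting tensor factors). Then the number of distinct eigenvalues of X is at most (n+1)^d (n+d)^{d²}, which is polynomial in n for fixed d. -/
open Matrix Polynomial

noncomputable section

lemma exists_perm_of_card_fiber_eq {n : ℕ} {T : Type*} [DecidableEq T]
    (f g : Fin n → T)
    (h : ∀ t, Fintype.card {k // f k = t} = Fintype.card {k // g k = t}) :
    ∃ π : Equiv.Perm (Fin n), f = g ∘ π := by
  have e : ∀ t, {k // f k = t} ≃ {k // g k = t} := fun t => Fintype.equivOfCardEq (h t)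
  refine ⟨((Equiv.sigmaFiberEquiv f).symm.trans (Equiv.sigmaCongrRight e)).trans
      (Equiv.sigmaFiberEquiv g), ?_⟩
  funext k
  have := ((e (f k)) ⟨k, rfl⟩).2
  simpa [Equiv.sigmaFiberEquiv, Equiv.sigmaCongrRight] using this.symm

variable {d n : ℕ}

/-- invariance predicate -/
def PermInv (d n : ℕ) (M : Matrix (Fin n → Fin d) (Fin n → Fin d) ℂ) : Prop :=
  ∀ (π : Equiv.Perm (Fin n)) (a b : Fin n → Fin d), M (a ∘ π) (b ∘ π) = M a b

lemma permInv_one : PermInv d n 1 := by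
  intro π a b
  rw [Matrix.one_apply, Matrix.one_apply]
  congr 1
  simp only [eq_iff_iff]
  constructor
  · intro h
    funext k
    have := congrFun h (π.symm k)
    simpa using this
  · intro h; subst h; rfl

lemma permInv_mul {M N : Matrix (Fin n → Fin d) (Fin n → Fin d) ℂ}
    (hM : PermInv d n M) (hN : PermInv d n N) : PermInv d n (M * N) := by
  intro π a b
  simp only [Matrix.mul_apply]
  exact (Fintype.sum_equiv (Equiv.arrowCongr (π.symm) (Equiv.refl (Fin d)))
    (fun c => M a c * N c b) (fun c => M (a ∘ π) c * N c (b ∘ π))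
    (fun c => by
      have h1 := hM π a c
      have h2 := hN π c b
      have hc : ((Equiv.symm π).arrowCongr (Equiv.refl (Fin d))) c = c ∘ π := by
        funext k; simp [Equiv.arrowCongr]
      simp only [hc]
      rw [← h1, ← h2])).symm

lemma permInv_pow {M : Matrix (Fin n → Fin d) (Fin n → Fin d) ℂ}
    (hM : PermInv d n M) (k : ℕ) : PermInv d n (M ^ k) := by
  induction k with
  | zero => simpa using permInv_one
  | succ k ih => rw [pow_succ]; exact permInv_mul ih hM

/-- The submodule of invariant matrices. -/
def invSubmodule (d n : ℕ) : Submodule ℂ (Matrix (Fin n → Fin d) (Fin n → Fin d) ℂ) where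
  carrier := {M | PermInv d n M}
  add_mem' := fun hM hN π a b => by simp [Matrix.add_apply, hM π a b, hN π a b]
  zero_mem' := fun π a b => rfl
  smul_mem' := fun c M hM π a b => by simp [Matrix.smul_apply, hM π a b]

lemma spectrum_ncard_le_finrank {I : Type*} [Fintype I] [DecidableEq I] [Nonempty I]
    (A : Matrix I I ℂ) (S : Submodule ℂ (Matrix I I ℂ)) (hpow : ∀ k : ℕ, A ^ k ∈ S) :
    (spectrum ℂ A).ncard ≤ Module.finrank ℂ S := by
  classical
  set N := Module.finrank ℂ S with hN
  have hdep : ¬ LinearIndependent ℂ (fun i : Fin (N + 1) => (⟨A ^ (i : ℕ), hpow i⟩ : S)) := by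
    intro h
    have := h.fintype_card_le_finrank
    simp only [Fintype.card_fin, ← hN] at this
    omega
  rw [Fintype.not_linearIndependent_iff] at hdep
  obtain ⟨c, hc0, i0, hi0⟩ := hdep
  set p : ℂ[X] := ∑ i : Fin (N + 1), C (c i) * Polynomial.X ^ (i : ℕ) with hp
  have hcoeff : p.coeff i0 = c i0 := by
    rw [hp, Polynomial.finset_sum_coeff]
    rw [Finset.sum_eq_single i0]
    · simp
    · intro i _ hne
      simp only [Polynomial.coeff_C_mul, Polynomial.coeff_X_pow]
      rw [if_neg (by simpa [Fin.val_inj] using (Ne.symm hne)), mul_zero]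
    · simp
  have hp0 : p ≠ 0 := fun h => hi0 (by rw [h] at hcoeff; simpa using hcoeff.symm)
  have hsum0 : (∑ i : Fin (N + 1), c i • A ^ (i : ℕ)) = 0 := by
    have := congrArg (Subtype.val) hc0
    simpa using this
  have haeval : Polynomial.aeval A p = 0 := by
    rw [hp, map_sum]
    rw [← hsum0]
    refine Finset.sum_congr rfl fun i _ => ?_
    simp [Algebra.smul_def]
  have hsub : spectrum ℂ A ⊆ ↑p.roots.toFinset := by
    intro μ hμ
    have h1 := spectrum.subset_polynomial_aeval A p ⟨μ, hμ, rfl⟩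
    rw [haeval, spectrum.zero_eq] at h1
    simp only [Set.mem_singleton_iff] at h1
    simp only [Finset.coe_sort_coe, Multiset.mem_toFinset, Finset.mem_coe]
    rw [Polynomial.mem_roots hp0]
    exact h1
  have hdeg : p.natDegree ≤ N := by
    rw [hp]
    refine Polynomial.natDegree_sum_le_of_forall_le _ _ fun i _ => ?_
    refine le_trans (Polynomial.natDegree_C_mul_le _ _) ?_
    rw [Polynomial.natDegree_X_pow]
    exact Nat.lt_succ_iff.mp i.2
  calc (spectrum ℂ A).ncard ≤ p.roots.toFinset.card := by
        rw [← Set.ncard_coe_finset]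
        exact Set.ncard_le_ncard hsub (Finset.finite_toSet _)
    _ ≤ Multiset.card p.roots := Multiset.toFinset_card_le _
    _ ≤ p.natDegree := Polynomial.card_roots' p
    _ ≤ N := hdeg

variable {d n : ℕ}

def typeMap (d n : ℕ) (q : (Fin n → Fin d) × (Fin n → Fin d)) :
    (Fin d × Fin d) → Fin (n + 1) :=
  fun t => ⟨Fintype.card {k // (q.1 k, q.2 k) = t},
    Nat.lt_succ_of_le (le_trans (Fintype.card_subtype_le _) (by simp))⟩

lemma finrank_inv_le (hI : Nonempty (Fin n → Fin d))
    (S : Submodule ℂ (Matrix (Fin n → Fin d) (Fin n → Fin d) ℂ))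
    (hS : ∀ M ∈ S, ∀ (π : Equiv.Perm (Fin n)) (a b : Fin n → Fin d),
      M (a ∘ π) (b ∘ π) = M a b)
    (hperm : ∀ (f g : Fin n → (Fin d × Fin d)),
      (∀ t, Fintype.card {k // f k = t} = Fintype.card {k // g k = t}) →
      ∃ π : Equiv.Perm (Fin n), f = g ∘ π) :
    Module.finrank ℂ S ≤ (n + 1) ^ (d ^ 2) := by
  classical
  haveI : Nonempty ((Fin n → Fin d) × (Fin n → Fin d)) := ⟨hI.some, hI.some⟩
  set T := (Fin d × Fin d) → Fin (n + 1) with hT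
  set rep : T → (Fin n → Fin d) × (Fin n → Fin d) :=
    fun t => if h : ∃ q, typeMap d n q = t then h.choose else Classical.arbitrary _ with hrep
  let L : Matrix (Fin n → Fin d) (Fin n → Fin d) ℂ →ₗ[ℂ] (T → ℂ) :=
    { toFun := fun M t => M (rep t).1 (rep t).2
      map_add' := fun M N => by funext t; simp [Matrix.add_apply]
      map_smul' := fun c M => by funext t; simp [Matrix.smul_apply] }
  have hinj : Function.Injective (L.comp S.subtype) := by
    rw [injective_iff_map_eq_zero]
    intro M hM0
    have h0 : ∀ t : T, (M : Matrix _ _ ℂ) (rep t).1 (rep t).2 = 0 := fun t => congrFun hM0 t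
    ext a b
    set t := typeMap d n (a, b) with htdef
    have hex : ∃ q, typeMap d n q = t := ⟨(a, b), rfl⟩
    have hΦ : typeMap d n (rep t) = t := by
      rw [hrep]; simp only [dif_pos hex]; exact hex.choose_spec
    have hcards : ∀ s, Fintype.card {k // ((rep t).1 k, (rep t).2 k) = s} =
        Fintype.card {k // (a k, b k) = s} := by
      intro s
      have := congrFun hΦ s
      rw [htdef] at this
      exact congrArg Fin.val this
    obtain ⟨π, hπ⟩ := hperm (fun k => (a k, b k)) (fun k => ((rep t).1 k, (rep t).2 k))
      (fun s => (hcards s).symm)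
    have ha : a = (rep t).1 ∘ π := funext fun k => congrArg Prod.fst (congrFun hπ k)
    have hb : b = (rep t).2 ∘ π := funext fun k => congrArg Prod.snd (congrFun hπ k)
    show (M : Matrix _ _ ℂ) a b = 0
    rw [ha, hb, hS M M.2 π (rep t).1 (rep t).2]
    exact h0 t
  have h1 : Module.finrank ℂ S ≤ Module.finrank ℂ (T → ℂ) :=
    LinearMap.finrank_le_finrank_of_injective hinj
  rw [Module.finrank_pi] at h1
  calc Module.finrank ℂ S ≤ Fintype.card T := h1
    _ = (n + 1) ^ (d ^ 2) := by
        show Fintype.card (Fin d × Fin d → Fin (n + 1)) = _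
        rw [Fintype.card_fun]
        simp [pow_two]

/-- A permutation-invariant operator on `(ℂ^d)^{⊗n}` has at most
`(n+1)^d (n+d)^{d²}` distinct eigenvalues (elements of its spectrum). -/
theorem permutation_invariant_spectrum_bound
    (d n : ℕ) (X : Matrix (Fin n → Fin d) (Fin n → Fin d) ℂ)
    (hX : ∀ (π : Equiv.Perm (Fin n)) (a b : Fin n → Fin d), X (a ∘ π) (b ∘ π) = X a b) :
    (spectrum ℂ X).ncard ≤ (n + 1) ^ d * (n + d) ^ (d ^ 2) := by
  classical
  have harith : (n + 1) ^ (d ^ 2) ≤ (n + 1) ^ d * (n + d) ^ (d ^ 2) := by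
    rcases Nat.eq_zero_or_pos d with hd | hd
    · subst hd; simp
    · calc (n + 1) ^ (d ^ 2) ≤ (n + d) ^ (d ^ 2) := Nat.pow_le_pow_left (by omega) _
        _ ≤ (n + 1) ^ d * (n + d) ^ (d ^ 2) := Nat.le_mul_of_pos_left _ (by positivity)
  by_cases hI : Nonempty (Fin n → Fin d)
  · haveI := hI
    have hXmem : X ∈ invSubmodule d n := hX
    have hpow : ∀ k : ℕ, X ^ k ∈ invSubmodule d n := fun k => permInv_pow hX k
    have h1 : (spectrum ℂ X).ncard ≤ Module.finrank ℂ (invSubmodule d n) :=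
      spectrum_ncard_le_finrank X _ hpow
    have h2 : Module.finrank ℂ (invSubmodule d n) ≤ (n + 1) ^ (d ^ 2) :=
      finrank_inv_le hI _ (fun M hM => hM) (fun f g h => exists_perm_of_card_fiber_eq f g h)
    exact le_trans h1 (le_trans h2 harith)
  · haveI : IsEmpty (Fin n → Fin d) := not_nonempty_iff.mp hI
    haveI : Subsingleton (Matrix (Fin n → Fin d) (Fin n → Fin d) ℂ) := by
      constructor
      intro a b
      ext i j
      exact (IsEmpty.false i).elim
    have hs : spectrum ℂ X = ∅ := by
      ext μ
      simp [spectrum.mem_iff, isUnit_of_subsingleton]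
    simp [hs]

end
end

section
/- Let A ⊆ D(H) and B ⊆ PSD(H) be convex sets on a finite-dimensional Hilbert space. For ε ∈ (0,1), the optimal worst-case type-II error β_ε(A‖B) := inf over tests 0 ≤ M ≤ I with sup_{ρ∈A} tr[ρ(I−M)] ≤ ε of sup_{σ∈B} tr[σM] equals sup_{ρ∈A} sup_{σ∈B} β_ε(ρ‖σ), where β_ε(ρ‖σ) = min{tr[σM] : 0 ≤ M ≤ I, tr[ρ(I−M)] ≤ ε} is the pairwise optimal type-II error. Equivalently, −log β_ε(A‖B) = D_{H,ε}(A‖B) := inf_{ρ∈A,σ∈B} D_{H,ε}(ρ‖σ). -/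
open scoped Matrix ComplexOrder Kronecker Classical ENNReal NNReal
open Matrix Filter

noncomputable section

variable {ι : Type*} [Fintype ι] [DecidableEq ι]

/-- A quantum test: an operator `M` with `0 ≤ M ≤ I`. -/
def IsTest (M : Matrix ι ι ℂ) : Prop := M.PosSemidef ∧ (1 - M).PosSemidef

/-- Pairwise optimal type-II error at type-I threshold `ε`. -/
def betaPair (ε : ℝ) (ρ σ : Matrix ι ι ℂ) : ℝ≥0∞ :=
  ⨅ M ∈ {M : Matrix ι ι ℂ | IsTest M ∧ trR ρ (1 - M) ≤ ε},
    ENNReal.ofReal (trR σ M)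

/-- Worst-case optimal type-II error for composite hypotheses `A` vs `B`. -/
def betaSet (ε : ℝ) (A B : Set (Matrix ι ι ℂ)) : ℝ≥0∞ :=
  ⨅ M ∈ {M : Matrix ι ι ℂ | IsTest M ∧ ∀ ρ ∈ A, trR ρ (1 - M) ≤ ε},
    ⨆ σ ∈ B, ENNReal.ofReal (trR σ M)

/-- `- log` on `ℝ≥0∞`, valued in `EReal` (`-log 0 = ⊤`, `-log ⊤ = ⊥`). -/
def negLog (x : ℝ≥0∞) : EReal :=
  if x = 0 then ⊤ else if x = ⊤ then ⊥ else ((-Real.log x.toReal : ℝ) : EReal)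


set_option linter.unusedSectionVars false
set_option maxHeartbeats 1000000

section AuxMinimax

variable {ι : Type*} [Fintype ι] [DecidableEq ι]

lemma trR_smul_left (c : ℝ) (X Y : Matrix ι ι ℂ) : trR (c • X) Y = c * trR X Y := by
  simp [trR, smul_mul_assoc, Matrix.trace_smul, Complex.smul_re]

lemma trR_sum_left {α : Type*} (s : Finset α) (f : α → Matrix ι ι ℂ) (Y : Matrix ι ι ℂ) :
    trR (∑ i ∈ s, f i) Y = ∑ i ∈ s, trR (f i) Y := by
  simp [trR, Matrix.sum_mul, Matrix.trace_sum, Complex.re_sum]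

lemma trR_smul_right (c : ℝ) (X Y : Matrix ι ι ℂ) : trR X (c • Y) = c * trR X Y := by
  simp [trR, Matrix.mul_smul, Matrix.trace_smul, Complex.smul_re]

lemma trR_add_right (X Y Z : Matrix ι ι ℂ) : trR X (Y + Z) = trR X Y + trR X Z := by
  simp [trR, Matrix.mul_add, Matrix.trace_add]

lemma trR_zero_right (X : Matrix ι ι ℂ) : trR X 0 = 0 := by simp [trR]

lemma trR_zero_left (X : Matrix ι ι ℂ) : trR 0 X = 0 := by simp [trR]

lemma cont_trR (X : Matrix ι ι ℂ) : Continuous fun M : Matrix ι ι ℂ => trR X M :=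
  Complex.continuous_re.comp ((continuous_const.matrix_mul continuous_id).matrix_trace)

lemma isTest_one : IsTest (1 : Matrix ι ι ℂ) :=
  ⟨Matrix.PosSemidef.one, by simpa using Matrix.PosSemidef.zero⟩

lemma isTest_zero : IsTest (0 : Matrix ι ι ℂ) :=
  ⟨Matrix.PosSemidef.zero, by simpa using Matrix.PosSemidef.one⟩

lemma psd_smul {M : Matrix ι ι ℂ} (hM : M.PosSemidef) {c : ℝ} (hc : 0 ≤ c) :
    (c • M).PosSemidef := by
  refine Matrix.PosSemidef.of_dotProduct_mulVec_nonneg ?_ ?_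
  · have := hM.1
    unfold Matrix.IsHermitian at *
    ext i j
    simp [Matrix.conjTranspose_apply, Matrix.smul_apply, ← Matrix.conjTranspose_apply, this]
  · intro x
    have h0 := hM.dotProduct_mulVec_nonneg x
    have h : star x ⬝ᵥ (c • M).mulVec x = c • (star x ⬝ᵥ M.mulVec x) := by
      rw [Matrix.smul_mulVec, dotProduct_smul]
    rw [h]
    rw [Complex.le_def] at h0 ⊢
    constructor
    · simpa [Complex.smul_re] using mul_nonneg hc h0.1
    · simp [Complex.smul_im, ← h0.2]

lemma one_sub_combo (M N : Matrix ι ι ℂ) {a b : ℝ} (hab : a + b = 1) :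
    (1 : Matrix ι ι ℂ) - (a • M + b • N) = a • (1 - M) + b • (1 - N) := by
  have key : a • ((1 : Matrix ι ι ℂ) - M) + b • ((1 : Matrix ι ι ℂ) - N)
      = (a + b) • (1 : Matrix ι ι ℂ) - (a • M + b • N) := by module
  rw [hab, one_smul] at key
  rw [key]

lemma convex_isTest : Convex ℝ {M : Matrix ι ι ℂ | IsTest M} := by
  rintro M ⟨hM1, hM2⟩ N ⟨hN1, hN2⟩ a b ha hb hab
  constructor
  · exact (psd_smul hM1 ha).add (psd_smul hN1 hb)
  · rw [one_sub_combo M N hab]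
    exact (psd_smul hM2 ha).add (psd_smul hN2 hb)

lemma quad_eval (N : Matrix ι ι ℂ) {i j : ι} (hij : i ≠ j) (b c : ℂ) :
    star (Pi.single i b + Pi.single j c) ⬝ᵥ N.mulVec (Pi.single i b + Pi.single j c)
      = star b * b * N i i + star b * c * N i j + star c * b * N j i + star c * c * N j j := by
  have hs : star (Pi.single i b + Pi.single j c)
      = (Pi.single i (star b) + Pi.single j (star c) : ι → ℂ) := by
    funext k
    rcases eq_or_ne k i with rfl | hki
    · simp [Pi.single_apply, hij.symm]
    · rcases eq_or_ne k j with rfl | hkj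
      · simp [Pi.single_apply, hki, hij]
      · simp [Pi.single_apply, hki, hkj]
  rw [hs, Matrix.mulVec_add, add_dotProduct, dotProduct_add,
    dotProduct_add]
  have hmv : ∀ (k : ι) (x : ℂ), N.mulVec (Pi.single k x) = fun l => N l k * x :=
    fun k x => Matrix.mulVec_single N k x
  rw [hmv, hmv]
  simp only [single_dotProduct]
  ring

lemma diag_le_one {M : Matrix ι ι ℂ} (h : IsTest M) (i : ι) :
    0 ≤ (M i i).re ∧ (M i i).re ≤ 1 ∧ (M i i).im = 0 := by
  have h1 := h.1.dotProduct_mulVec_nonneg (Pi.single i 1)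
  have h2 := h.2.dotProduct_mulVec_nonneg (Pi.single i 1)
  have key : ∀ N : Matrix ι ι ℂ, star (Pi.single i 1) ⬝ᵥ N.mulVec (Pi.single i 1) = N i i := by
    intro N
    have hss : star (Pi.single i (1:ℂ)) = (Pi.single i 1 : ι → ℂ) := by
      funext k
      rcases eq_or_ne k i with rfl|hk
      · simp [Pi.single_apply]
      · simp [Pi.single_apply, hk]
    rw [hss, Matrix.mulVec_single, single_dotProduct]
    simp
  rw [key] at h1 h2
  rw [Complex.le_def] at h1 h2
  simp only [Matrix.sub_apply, Matrix.one_apply_eq, Complex.zero_re, Complex.zero_im,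
    Complex.sub_re, Complex.sub_im, Complex.one_re, Complex.one_im] at h1 h2
  exact ⟨h1.1, by linarith [h2.1], h1.2.symm⟩

lemma entry_bound {M : Matrix ι ι ℂ} (h : IsTest M) (i j : ι) :
    ‖M i j‖ ≤ 1 := by
  rcases eq_or_ne i j with rfl | hij
  · obtain ⟨h0, h1, him⟩ := diag_le_one h i
    rw [Complex.norm_def, Complex.normSq_apply, him]
    simp only [mul_zero, add_zero]
    rw [show (M i i).re * (M i i).re = (M i i).re ^ 2 by ring, Real.sqrt_sq h0]
    exact h1
  · set a := M i j with ha
    rcases eq_or_ne a 0 with h0 | h0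
    · simp [h0]
    set t : ℝ := ‖a‖ with ht
    have htpos : 0 < t := norm_pos_iff.mpr h0
    have hq := h.1.dotProduct_mulVec_nonneg (Pi.single i (t : ℂ) + Pi.single j (-(star a)))
    rw [quad_eval M hij] at hq
    have hherm : Mᴴ = M := h.1.1
    have hji : M j i = star a := by
      conv_lhs => rw [← hherm]
      simp [Matrix.conjTranspose_apply, ha]
    have h1 : (starRingEnd ℂ) a * a = ((t^2 : ℝ) : ℂ) := by
      rw [← Complex.normSq_eq_conj_mul_self]
      norm_cast
      rw [← Complex.sq_norm]
    have h2 : a * (starRingEnd ℂ) a = ((t^2 : ℝ) : ℂ) := by rw [mul_comm]; exact h1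
    have hexp : star (t:ℂ) * (t:ℂ) * M i i + star (t:ℂ) * (-(star a)) * a
        + star (-(star a)) * (t:ℂ) * M j i + star (-(star a)) * (-(star a)) * M j j
        = ((t^2 : ℝ) : ℂ) * M i i + ((t^2 : ℝ) : ℂ) * M j j - ((2 * t^3 : ℝ) : ℂ) := by
      rw [hji]
      simp only [star_neg, star_star, Complex.star_def, Complex.conj_conj,
        Complex.conj_ofReal]
      push_cast at h1 h2 ⊢
      linear_combination (-(t:ℂ)) * h1 + (-(t:ℂ)) * h2 + M j j * h2
    rw [hexp] at hq
    rw [Complex.le_def] at hq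
    obtain ⟨hMi0, hMi1, hMiim⟩ := diag_le_one h i
    obtain ⟨hMj0, hMj1, hMjim⟩ := diag_le_one h j
    have hre : 0 ≤ t^2 * (M i i).re + t^2 * (M j j).re - 2*t^3 := by
      have hthis := hq.1
      simp only [Complex.sub_re, Complex.add_re, Complex.re_ofReal_mul, Complex.ofReal_re,
        Complex.zero_re] at hthis
      linarith
    have hcube : t^3 ≤ t^2 := by nlinarith
    nlinarith [mul_pos htpos htpos]

lemma isClosed_psd : IsClosed {M : Matrix ι ι ℂ | M.PosSemidef} := by
  have h1 : {M : Matrix ι ι ℂ | M.PosSemidef} =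
      {M : Matrix ι ι ℂ | Mᴴ = M} ∩ ⋂ x : ι → ℂ, {M | 0 ≤ star x ⬝ᵥ M.mulVec x} := by
    ext M; simp [Matrix.posSemidef_iff_dotProduct_mulVec, Matrix.IsHermitian, Set.mem_iInter]
  rw [h1]
  refine IsClosed.inter (isClosed_eq (continuous_id.matrix_conjTranspose) continuous_id) ?_
  refine isClosed_iInter fun x => ?_
  have hc : Continuous fun M : Matrix ι ι ℂ => star x ⬝ᵥ M.mulVec x :=
    (continuous_const).dotProduct (continuous_id.matrix_mulVec continuous_const)
  have h2 : {M : Matrix ι ι ℂ | 0 ≤ star x ⬝ᵥ M.mulVec x} =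
      (fun M : Matrix ι ι ℂ => star x ⬝ᵥ M.mulVec x) ⁻¹' {z : ℂ | 0 ≤ z} := rfl
  rw [h2]
  refine IsClosed.preimage hc ?_
  have h3 : {z : ℂ | 0 ≤ z} = {z : ℂ | 0 ≤ z.re} ∩ {z : ℂ | z.im = 0} := by
    ext z; simp [Complex.le_def, eq_comm]
  rw [h3]
  exact (isClosed_le continuous_const Complex.continuous_re).inter
    (isClosed_eq Complex.continuous_im continuous_const)

lemma isClosed_isTest : IsClosed {M : Matrix ι ι ℂ | IsTest M} := by
  have h : {M : Matrix ι ι ℂ | IsTest M} = {M : Matrix ι ι ℂ | M.PosSemidef} ∩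
      ((fun M : Matrix ι ι ℂ => 1 - M) ⁻¹' {M : Matrix ι ι ℂ | M.PosSemidef}) := rfl
  rw [h]
  exact isClosed_psd.inter (isClosed_psd.preimage (continuous_const.sub continuous_id))

lemma isCompact_isTest : IsCompact {M : Matrix ι ι ℂ | IsTest M} := by
  have hK : IsCompact (Set.univ.pi fun _ : ι =>
      (Set.univ.pi fun _ : ι => Metric.closedBall (0:ℂ) 1)) :=
    isCompact_univ_pi fun _ => isCompact_univ_pi fun _ => isCompact_closedBall _ _
  refine IsCompact.of_isClosed_subset hK isClosed_isTest ?_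
  intro M hM
  refine (Set.mem_pi (f := fun i j => M i j)).2 ?_
  intro i _
  rw [Set.mem_pi]
  intro j _
  rw [Metric.mem_closedBall, dist_zero_right]
  simpa using entry_bound hM i j

lemma negLog_eq (x : ℝ≥0∞) : negLog x = - ENNReal.log x := by
  unfold negLog ENNReal.log
  rcases eq_or_ne x 0 with rfl | h0
  · simp
  rcases eq_or_ne x ⊤ with rfl | ht
  · simp [h0]
  · simp only [h0, ht, if_false]
    rw [← EReal.coe_neg]

lemma ereal_neg_iSup {α : Sort*} (g : α → EReal) : (-(⨆ i, g i)) = ⨅ i, -(g i) := by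
  refine le_antisymm (le_iInf fun i => EReal.neg_le_neg_iff.2 (le_iSup g i)) ?_
  rw [← neg_neg (⨅ i, -g i)]
  refine EReal.neg_le_neg_iff.2 (iSup_le fun i => ?_)
  exact EReal.le_neg_of_le_neg (iInf_le _ i)

lemma negLog_iSup {α : Sort*} (f : α → ℝ≥0∞) : negLog (⨆ i, f i) = ⨅ i, negLog (f i) := by
  let e : ℝ≥0∞ ≃o EReal :=
    StrictMono.orderIsoOfSurjective _ ENNReal.log_strictMono ENNReal.log_surjective
  have he : ∀ x, ENNReal.log x = e x := fun x => rfl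
  have hlog : ENNReal.log (⨆ i, f i) = ⨆ i, ENNReal.log (f i) := by
    rw [he]; rw [e.map_iSup]; exact iSup_congr fun i => (he _).symm
  rw [negLog_eq, hlog, ereal_neg_iSup]
  exact iInf_congr fun i => (negLog_eq _).symm

/-- The family of closed constraint sets for the composite testing problem. -/
def constrSet (A B : Set (Matrix ι ι ℂ)) (ε v' : ℝ) : (↥A ⊕ ↥B) → Set (Matrix ι ι ℂ) :=
  Sum.elim (fun ρ => {M | trR (ρ : Matrix ι ι ℂ) (1 - M) ≤ ε})
           (fun σ => {M | trR (σ : Matrix ι ι ℂ) M ≤ v'})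

lemma finite_step (A B : Set (Matrix ι ι ℂ)) (hAconv : Convex ℝ A) (hBconv : Convex ℝ B)
    {ε v' : ℝ} (hε₀ : 0 < ε) (hv'0 : 0 ≤ v') {ρ₀ : Matrix ι ι ℂ} (hρ₀ : ρ₀ ∈ A)
    (hpair : ∀ ρ ∈ A, ∀ σ ∈ B, ∀ δ : ℝ, 0 < δ →
      ∃ M, IsTest M ∧ trR ρ (1 - M) ≤ ε ∧ trR σ M < v' + δ)
    (u : Finset (↥A ⊕ ↥B)) :
    ({M : Matrix ι ι ℂ | IsTest M} ∩ ⋂ i ∈ u, constrSet A B ε v' i).Nonempty := by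
  classical
  by_contra hempty
  rw [Set.not_nonempty_iff_eq_empty] at hempty
  set c : (↥A ⊕ ↥B) → Matrix ι ι ℂ → ℝ :=
    Sum.elim (fun ρ M => trR (ρ : Matrix ι ι ℂ) (1 - M) - ε)
             (fun σ M => trR (σ : Matrix ι ι ℂ) M - v') with hc
  have hc_cont : ∀ i, Continuous (c i) := by
    rintro (ρ | σ)
    · exact ((cont_trR _).comp (continuous_const.sub continuous_id)).sub continuous_const
    · exact (cont_trR _).sub continuous_const
  have hc_affine : ∀ (i : ↥A ⊕ ↥B) (M N : Matrix ι ι ℂ) (a b : ℝ), a + b = 1 →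
      c i (a • M + b • N) = a * c i M + b * c i N := by
    rintro (ρ | σ) M N a b hab
    · simp only [hc, Sum.elim_inl]
      rw [one_sub_combo M N hab, trR_add_right, trR_smul_right, trR_smul_right]
      linear_combination ε * hab
    · simp only [hc, Sum.elim_inr]
      rw [trR_add_right, trR_smul_right, trR_smul_right]
      linear_combination v' * hab
  set Φ : Matrix ι ι ℂ → (↥u → ℝ) := fun M k => c k.1 M with hΦ
  have hΦcont : Continuous Φ := continuous_pi fun k => hc_cont k.1
  set D := Φ '' {M : Matrix ι ι ℂ | IsTest M} with hD
  have hDcomp : IsCompact D := isCompact_isTest.image hΦcont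
  have hDconv : Convex ℝ D := by
    rintro x ⟨M, hM, rfl⟩ y ⟨N, hN, rfl⟩ a b ha hb hab
    refine ⟨a • M + b • N, convex_isTest hM hN ha hb hab, ?_⟩
    funext k
    simp only [hΦ, Pi.add_apply, Pi.smul_apply, smul_eq_mul]
    exact hc_affine k.1 M N a b hab
  set O := {x : ↥u → ℝ | ∀ k, x k ≤ 0} with hO
  have hOconv : Convex ℝ O := by
    intro x hx y hy a b ha hb hab
    intro k
    simp only [Pi.add_apply, Pi.smul_apply, smul_eq_mul]
    exact add_nonpos (mul_nonpos_of_nonneg_of_nonpos ha (hx k))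
      (mul_nonpos_of_nonneg_of_nonpos hb (hy k))
  have hOcl : IsClosed O := by
    have h : O = ⋂ k, {x : ↥u → ℝ | x k ≤ 0} := by ext x; simp [hO, Set.mem_iInter]
    rw [h]
    exact isClosed_iInter fun k => isClosed_le (continuous_apply k) continuous_const
  have hdisj : Disjoint D O := by
    rw [Set.disjoint_left]
    rintro x ⟨M, hM, rfl⟩ hxO
    have hmem : M ∈ {M : Matrix ι ι ℂ | IsTest M} ∩ ⋂ i ∈ u, constrSet A B ε v' i := by
      refine ⟨hM, ?_⟩
      rw [Set.mem_iInter₂]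
      intro i hi
      have hk := hxO ⟨i, hi⟩
      rcases i with ρ | σ
      · simp only [hΦ, hc, Sum.elim_inl] at hk
        simpa [constrSet, sub_nonpos] using hk
      · simp only [hΦ, hc, Sum.elim_inr] at hk
        simpa [constrSet, sub_nonpos] using hk
    rw [hempty] at hmem
    exact hmem
  obtain ⟨f, U, V, hfD, hUV, hfO⟩ :=
    geometric_hahn_banach_compact_closed hDconv hDcomp hOconv hOcl hdisj
  have hV0 : V < 0 := by
    have h0 := hfO 0 (fun k => le_refl 0)
    simpa using h0
  set lam : ↥u → ℝ := fun k => -(f (Pi.single k 1)) with hlam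
  have hlam0 : ∀ k, 0 ≤ lam k := by
    intro k
    by_contra hneg
    push_neg at hneg
    have hfk : 0 < f (Pi.single k 1) := by
      have : -(f (Pi.single k 1)) < 0 := hneg
      linarith
    have hmem : (V / f (Pi.single k 1)) • (Pi.single k 1 : ↥u → ℝ) ∈ O := by
      intro k'
      simp only [Pi.smul_apply, smul_eq_mul]
      refine mul_nonpos_of_nonpos_of_nonneg (div_nonpos_of_nonpos_of_nonneg hV0.le hfk.le) ?_
      rcases eq_or_ne k' k with rfl | hk'
      · simp
      · simp [Pi.single_apply, hk']
    have hlt := hfO _ hmem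
    rw [_root_.map_smul, smul_eq_mul, div_mul_cancel₀ _ (ne_of_gt hfk)] at hlt
    exact lt_irrefl V hlt
  have hrep : ∀ x : ↥u → ℝ, f x = -∑ k, lam k * x k := by
    intro x
    have hx : x = ∑ k, x k • (Pi.single k 1 : ↥u → ℝ) := by
      have h := Finset.univ_sum_single x
      conv_lhs => rw [← h]
      exact Finset.sum_congr rfl fun k _ => by
        rw [← Pi.single_smul, smul_eq_mul, mul_one]
    have h1 : f x = ∑ k, x k * f (Pi.single k 1) := by
      conv_lhs => rw [hx]
      rw [_root_.map_sum]
      exact Finset.sum_congr rfl fun k _ => by rw [_root_.map_smul, smul_eq_mul]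
    rw [h1, ← Finset.sum_neg_distrib]
    exact Finset.sum_congr rfl fun k _ => by simp only [hlam]; ring
  have master : ∀ M, IsTest M → -V < ∑ k : ↥u, lam k * c k.1 M := by
    intro M hM
    have h1 := hfD (Φ M) ⟨M, hM, rfl⟩
    rw [hrep] at h1
    have h2 : ∀ k : ↥u, Φ M k = c k.1 M := fun k => rfl
    have h3 : -(∑ k : ↥u, lam k * c k.1 M) < U := by
      calc -(∑ k : ↥u, lam k * c k.1 M) = -(∑ k : ↥u, lam k * Φ M k) := by
            exact congrArg Neg.neg (Finset.sum_congr rfl fun k _ => by rw [h2])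
        _ < U := h1
    linarith
  -- reform the sum over u
  set lam' : (↥A ⊕ ↥B) → ℝ := fun i => if h : i ∈ u then lam ⟨i, h⟩ else 0 with hlam'
  have hlam'0 : ∀ i, 0 ≤ lam' i := by
    intro i
    simp only [hlam']
    split
    · exact hlam0 _
    · exact le_refl 0
  have hsum : ∀ M : Matrix ι ι ℂ, ∑ k : ↥u, lam k * c k.1 M = ∑ i ∈ u, lam' i * c i M := by
    intro M
    rw [← Finset.sum_coe_sort u (fun i => lam' i * c i M)]
    exact Finset.sum_congr rfl fun k _ => by
      simp only [hlam']
      rw [dif_pos k.2]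
  set Z : ℝ := ∑ ρ ∈ u.toLeft, lam' (Sum.inl ρ) with hZ
  set L : ℝ := ∑ σ ∈ u.toRight, lam' (Sum.inr σ) with hL
  have hZ0 : 0 ≤ Z := Finset.sum_nonneg fun _ _ => hlam'0 _
  have hL0 : 0 ≤ L := Finset.sum_nonneg fun _ _ => hlam'0 _
  set W : Matrix ι ι ℂ := ∑ ρ ∈ u.toLeft, lam' (Sum.inl ρ) • (ρ : Matrix ι ι ℂ) with hW
  set T : Matrix ι ι ℂ := ∑ σ ∈ u.toRight, lam' (Sum.inr σ) • (σ : Matrix ι ι ℂ) with hT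
  have hWtr : ∀ X, trR W X = ∑ ρ ∈ u.toLeft, lam' (Sum.inl ρ) * trR (ρ : Matrix ι ι ℂ) X := by
    intro X
    rw [hW, trR_sum_left]
    exact Finset.sum_congr rfl fun ρ _ => trR_smul_left _ _ _
  have hTtr : ∀ X, trR T X = ∑ σ ∈ u.toRight, lam' (Sum.inr σ) * trR (σ : Matrix ι ι ℂ) X := by
    intro X
    rw [hT, trR_sum_left]
    exact Finset.sum_congr rfl fun σ _ => trR_smul_left _ _ _
  have master2 : ∀ M, IsTest M → -V < trR W (1 - M) - Z * ε + (trR T M - L * v') := by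
    intro M hM
    have h1 := master M hM
    rw [hsum M] at h1
    rw [← Finset.toLeft_disjSum_toRight (u := u), Finset.sum_disjSum] at h1
    have hleft : ∑ ρ ∈ u.toLeft, lam' (Sum.inl ρ) * c (Sum.inl ρ) M
        = trR W (1 - M) - Z * ε := by
      rw [hWtr, hZ, Finset.sum_mul, ← Finset.sum_sub_distrib]
      refine Finset.sum_congr rfl fun ρ _ => ?_
      simp only [hc, Sum.elim_inl]
      ring
    have hright : ∑ σ ∈ u.toRight, lam' (Sum.inr σ) * c (Sum.inr σ) M
        = trR T M - L * v' := by
      rw [hTtr, hL, Finset.sum_mul, ← Finset.sum_sub_distrib]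
      refine Finset.sum_congr rfl fun σ _ => ?_
      simp only [hc, Sum.elim_inr]
      ring
    rw [hleft, hright] at h1
    linarith
  rcases eq_or_ne L 0 with hLz | hLz
  · -- all the σ-weights vanish; test M = 1 gives a contradiction
    have hTz : T = 0 := by
      rw [hT]
      refine Finset.sum_eq_zero fun σ hσ => ?_
      have h0 : lam' (Sum.inr σ) = 0 := by
        have := (Finset.sum_eq_zero_iff_of_nonneg (fun i _ => hlam'0 (Sum.inr i))).1
          (hL ▸ hLz) σ hσ
        exact this
      rw [h0, zero_smul]
    have h1 := master2 1 isTest_one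
    rw [sub_self, trR_zero_right, hTz, trR_zero_left, hLz] at h1
    have hZε : 0 ≤ Z * ε := mul_nonneg hZ0 hε₀.le
    linarith
  · have hLpos : 0 < L := lt_of_le_of_ne hL0 (Ne.symm hLz)
    -- the normalized σ-combination lies in B
    set σs : Matrix ι ι ℂ := L⁻¹ • T with hσs
    have hσsB : σs ∈ B := by
      have hrw : σs = ∑ σ ∈ u.toRight, (lam' (Sum.inr σ) / L) • (σ : Matrix ι ι ℂ) := by
        rw [hσs, hT, Finset.smul_sum]
        exact Finset.sum_congr rfl fun σ _ => by
          rw [smul_smul, div_eq_inv_mul]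
      rw [hrw]
      refine hBconv.sum_mem (fun σ _ => div_nonneg (hlam'0 _) hL0) ?_ (fun σ _ => σ.2)
      rw [← Finset.sum_div, ← hL, div_self hLz]
    have hσstr : ∀ X, trR T X = L * trR σs X := by
      intro X
      rw [hσs, trR_smul_left]
      field_simp
    -- the normalized ρ-combination (or ρ₀ if no ρ-weights)
    obtain ⟨ρs, hρsA, hρstr⟩ : ∃ ρs, ρs ∈ A ∧ ∀ X, trR W X = Z * trR ρs X := by
      rcases eq_or_ne Z 0 with hZz | hZz
      · refine ⟨ρ₀, hρ₀, fun X => ?_⟩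
        have hWz : W = 0 := by
          rw [hW]
          refine Finset.sum_eq_zero fun ρ hρ => ?_
          have h0 : lam' (Sum.inl ρ) = 0 :=
            (Finset.sum_eq_zero_iff_of_nonneg (fun i _ => hlam'0 (Sum.inl i))).1
              (hZ ▸ hZz) ρ hρ
          rw [h0, zero_smul]
        rw [hWz, trR_zero_left, hZz, zero_mul]
      · have hZpos : 0 < Z := lt_of_le_of_ne hZ0 (Ne.symm hZz)
        refine ⟨Z⁻¹ • W, ?_, fun X => ?_⟩
        · have hrw : Z⁻¹ • W = ∑ ρ ∈ u.toLeft, (lam' (Sum.inl ρ) / Z) • (ρ : Matrix ι ι ℂ) := by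
            rw [hW, Finset.smul_sum]
            exact Finset.sum_congr rfl fun ρ _ => by
              rw [smul_smul, div_eq_inv_mul]
          rw [hrw]
          refine hAconv.sum_mem (fun ρ _ => div_nonneg (hlam'0 _) hZ0) ?_ (fun ρ _ => ρ.2)
          rw [← Finset.sum_div, ← hZ, div_self hZz]
        · rw [trR_smul_left]
          field_simp
    -- extract a near-optimal pairwise test and contradict the master inequality
    obtain ⟨M₀, hM₀t, hM₀feas, hM₀val⟩ :=
      hpair ρs hρsA σs hσsB ((-V) / L) (div_pos (by linarith) hLpos)
    have h1 := master2 M₀ hM₀t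
    rw [hρstr, hσstr] at h1
    have h2 : Z * trR ρs (1 - M₀) ≤ Z * ε := mul_le_mul_of_nonneg_left hM₀feas hZ0
    have h3 : L * trR σs M₀ < L * (v' + (-V) / L) := mul_lt_mul_of_pos_left hM₀val hLpos
    have h4 : L * (v' + (-V) / L) = L * v' + (-V) := by
      field_simp
    nlinarith
  
end AuxMinimax

/-- The worst-case type-II error for composite hypothesis testing between
convex sets equals the supremum of the pairwise errors; equivalently, the hypothesis-testing
relative entropy between the sets is the infimum of the pairwise quantities. -/
theorem composite_hypothesis_testing_minimax
    (A B : Set (Matrix ι ι ℂ)) (hAdens : ∀ ρ ∈ A, IsDensity ρ)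
    (hBpsd : ∀ σ ∈ B, σ.PosSemidef) (hAconv : Convex ℝ A) (hBconv : Convex ℝ B)
    (ε : ℝ) (hε₀ : 0 < ε) (hε₁ : ε < 1) :
    betaSet ε A B = (⨆ ρ ∈ A, ⨆ σ ∈ B, betaPair ε ρ σ) ∧
      negLog (betaSet ε A B) = ⨅ ρ ∈ A, ⨅ σ ∈ B, negLog (betaPair ε ρ σ) := by
  classical
  have easy : (⨆ ρ ∈ A, ⨆ σ ∈ B, betaPair ε ρ σ) ≤ betaSet ε A B := by
    refine le_iInf₂ fun M hM => ?_
    refine iSup₂_le fun ρ hρ => iSup₂_le fun σ hσ => ?_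
    refine le_trans (iInf₂_le M ⟨hM.1, hM.2 ρ hρ⟩) ?_
    exact le_iSup₂ (f := fun σ' (_ : σ' ∈ B) => ENNReal.ofReal (trR σ' M)) σ hσ
  have hard : betaSet ε A B ≤ ⨆ ρ ∈ A, ⨆ σ ∈ B, betaPair ε ρ σ := by
    rcases Set.eq_empty_or_nonempty A with rfl | ⟨ρ₀, hρ₀⟩
    · refine le_trans (iInf₂_le (0 : Matrix ι ι ℂ)
        ⟨isTest_zero, fun ρ hρ => absurd hρ (Set.notMem_empty ρ)⟩) ?_
      refine le_trans (iSup₂_le fun σ _ => ?_) zero_le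
      simp [trR_zero_right]
    rcases Set.eq_empty_or_nonempty B with rfl | ⟨σ₀, hσ₀⟩
    · refine le_trans (iInf₂_le (1 : Matrix ι ι ℂ)
        ⟨isTest_one, fun ρ _ => by simp [trR_zero_right, hε₀.le]⟩) ?_
      simp
    set v : ℝ≥0∞ := ⨆ ρ ∈ A, ⨆ σ ∈ B, betaPair ε ρ σ with hv
    rcases eq_or_ne v ⊤ with hvt | hvt
    · exact hvt ▸ le_top
    set v' := v.toReal with hv'
    have hv'0 : 0 ≤ v' := ENNReal.toReal_nonneg
    have hofv : ENNReal.ofReal v' = v := ENNReal.ofReal_toReal hvt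
    have hpair : ∀ ρ ∈ A, ∀ σ ∈ B, ∀ δ : ℝ, 0 < δ →
        ∃ M, IsTest M ∧ trR ρ (1 - M) ≤ ε ∧ trR σ M < v' + δ := by
      intro ρ hρ σ hσ δ hδ
      have h1 : betaPair ε ρ σ ≤ v := by
        rw [hv]
        refine le_trans (le_iSup₂ (f := fun σ' (_ : σ' ∈ B) => betaPair ε ρ σ') σ hσ) ?_
        exact le_iSup₂ (f := fun ρ' (_ : ρ' ∈ A) => ⨆ σ' ∈ B, betaPair ε ρ' σ') ρ hρ
      have h2 : betaPair ε ρ σ < ENNReal.ofReal (v' + δ) := by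
        refine lt_of_le_of_lt h1 ?_
        rw [ENNReal.ofReal_add hv'0 hδ.le, hofv]
        refine ENNReal.lt_add_right hvt ?_
        simp only [ne_eq, ENNReal.ofReal_eq_zero, not_le]
        exact hδ
      rw [betaPair] at h2
      simp only [iInf_lt_iff] at h2
      obtain ⟨M, hMs, hMlt⟩ := h2
      refine ⟨M, hMs.1, hMs.2, ?_⟩
      by_contra hge
      push_neg at hge
      exact absurd hMlt (not_lt.2 (ENNReal.ofReal_le_ofReal hge))
    have hCcl : ∀ i : ↥A ⊕ ↥B, IsClosed (constrSet A B ε v' i) := by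
      rintro (ρ | σ)
      · exact isClosed_le
          (((cont_trR _).comp (continuous_const.sub continuous_id))) continuous_const
      · exact isClosed_le (cont_trR _) continuous_const
    have key : ({M : Matrix ι ι ℂ | IsTest M} ∩ ⋂ i, constrSet A B ε v' i).Nonempty := by
      by_contra hne
      rw [Set.not_nonempty_iff_eq_empty] at hne
      obtain ⟨u, hu⟩ := isCompact_isTest.elim_finite_subfamily_closed
        (constrSet A B ε v') hCcl hne
      obtain ⟨M, hM⟩ := finite_step A B hAconv hBconv hε₀ hv'0 hρ₀ hpair u
      rw [hu] at hM
      exact hM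
    obtain ⟨M, hMS, hMC⟩ := key
    rw [Set.mem_iInter] at hMC
    refine le_trans (iInf₂_le M ⟨hMS, fun ρ hρ => hMC (Sum.inl ⟨ρ, hρ⟩)⟩) ?_
    refine iSup₂_le fun σ hσ => ?_
    rw [← hofv]
    exact ENNReal.ofReal_le_ofReal (hMC (Sum.inr ⟨σ, hσ⟩))
  have h1 : betaSet ε A B = ⨆ ρ ∈ A, ⨆ σ ∈ B, betaPair ε ρ σ := le_antisymm hard easy
  refine ⟨h1, ?_⟩
  rw [h1]
  simp only [negLog_iSup]


end
end
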